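/- The Lobachevsky function Л(θ) = −∫₀^θ log|2 sin t| dt is periodic with period π: for all real θ, Л(θ + π) = Л(θ). -/

import Mathlib

/-!
The integrand `log |2 sin t|` is `π`-periodic and locally integrable, so its integral over
`[θ, θ + π]` does not depend on `θ`; over `[0, π]` it vanishes by Euler's evaluation
`∫₀^π log (sin t) dt = -π log 2`.
-/

/-- The Lobachevsky function `Л(θ) = -∫₀^θ log |2 sin t| dt`. -/
noncomputable def lobachevsky (θ : ℝ) : ℝ :=
  -∫ t in (0 : ℝ)..θ, Real.log |2 * Real.sin t|

open Real MeasureTheory Set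

theorem periodic_log_abs_two_mul_sin : Function.Periodic (fun t => log |2 * sin t|) π := by
  intro t
  simp only [sin_add_pi, mul_neg, abs_neg]

theorem intervalIntegrable_log_abs_two_mul_sin (a b : ℝ) :
    IntervalIntegrable (fun t => log |2 * sin t|) volume a b := by
  simpa only [norm_eq_abs] using
    (analyticOnNhd_const.mul analyticOnNhd_sin).meromorphicOn.intervalIntegrable_log_norm

theorem integral_log_abs_two_mul_sin_zero_pi : ∫ t in 0..π, log |2 * sin t| = 0 := by
  have h_split : ∫ t in 0..π, log |2 * sin t| = ∫ t in 0..π, (log 2 + log (sin t)) := by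
    simp only [intervalIntegral.integral_of_le pi_pos.le, integral_Ioc_eq_integral_Ioo]
    refine setIntegral_congr_fun measurableSet_Ioo fun t ht => ?_
    have h_sin : 0 < sin t := sin_pos_of_pos_of_lt_pi ht.1 ht.2
    rw [abs_of_pos (by positivity), log_mul two_ne_zero h_sin.ne']
  rw [h_split, intervalIntegral.integral_add intervalIntegrable_const (by exact intervalIntegrable_log_sin),
    intervalIntegral.integral_const, integral_log_sin_zero_pi]
  simp only [sub_zero, smul_eq_mul]
  ring

/-- The Lobachevsky function is periodic with period `π`. -/
theorem lobachevsky_periodic (θ : ℝ) :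
    lobachevsky (θ + Real.pi) = lobachevsky θ := by
  have h := periodic_log_abs_two_mul_sin.intervalIntegral_add_eq_add 0 θ
    intervalIntegrable_log_abs_two_mul_sin
  rw [zero_add, integral_log_abs_two_mul_sin_zero_pi, add_zero] at h
  simp only [lobachevsky, h]
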